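/- Define f(ρ, θ, φ) = (e^{2ρ cos θ} + e^{2ρ cos(θ−φ)}) / (e^{ρ cos θ} + e^{ρ cos(θ−φ)})² for real ρ, θ, φ. Then for every fixed ρ ≥ 0 and every fixed real θ₀, the function φ ↦ f(ρ, θ₀ + φ/2, φ) is monotonically nondecreasing on [0, π]. In particular, for 0 ≤ φ₁ ≤ φ₂ ≤ π and all real θ₀, f(ρ, θ₀ + φ₁/2, φ₁) ≤ f(ρ, θ₀ + φ₂/2, φ₂). -/

import Mathlib

open Real

/-- The polar-coordinate integrand arising from the variance of the
two-center softmax projection. -/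
noncomputable def f (ρ θ φ : ℝ) : ℝ :=
  (exp (2 * ρ * cos θ) + exp (2 * ρ * cos (θ - φ))) /
    (exp (ρ * cos θ) + exp (ρ * cos (θ - φ))) ^ 2

lemma key (a b : ℝ) :
    (exp (2 * a) + exp (2 * b)) / (exp a + exp b) ^ 2
      = 1 - 1 / (2 * Real.cosh ((a - b) / 2) ^ 2) := by
  have hc : Real.cosh ((a - b) / 2)
      = (exp ((a - b) / 2) + exp (-((a - b) / 2))) / 2 := Real.cosh_eq _
  have e1 : exp a = exp ((a + b) / 2) * exp ((a - b) / 2) := by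
    rw [← Real.exp_add]; ring_nf
  have e2 : exp b = exp ((a + b) / 2) * exp (-((a - b) / 2)) := by
    rw [← Real.exp_add]; ring_nf
  have e3 : exp (2 * a) = exp a * exp a := by rw [← Real.exp_add]; ring_nf
  have e4 : exp (2 * b) = exp b * exp b := by rw [← Real.exp_add]; ring_nf
  set P := exp ((a + b) / 2) with hP
  set X := exp ((a - b) / 2) with hX
  set Y := exp (-((a - b) / 2)) with hY
  have hPpos : 0 < P := Real.exp_pos _
  have hXpos : 0 < X := Real.exp_pos _
  have hYpos : 0 < Y := Real.exp_pos _
  have hXY : X * Y = 1 := by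
    rw [hX, hY, ← Real.exp_add]; simp
  rw [e3, e4, e1, e2, hc]
  have hden : (P * X + P * Y) ^ 2 ≠ 0 := by positivity
  have hden2 : ((X + Y) / 2) ≠ 0 := by positivity
  field_simp
  linear_combination (-2) * hXY

lemma f_eq (ρ θ₀ φ : ℝ) :
    f ρ (θ₀ + φ / 2) φ
      = 1 - 1 / (2 * Real.cosh (ρ * Real.sin θ₀ * Real.sin (φ / 2)) ^ 2) := by
  have hdiff : ρ * cos (θ₀ + φ / 2) - ρ * cos (θ₀ + φ / 2 - φ)
      = -(2 * (ρ * Real.sin θ₀ * Real.sin (φ / 2))) := by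
    have := Real.cos_sub_cos (θ₀ + φ / 2) (θ₀ + φ / 2 - φ)
    have h1 : (θ₀ + φ / 2 + (θ₀ + φ / 2 - φ)) / 2 = θ₀ := by ring
    have h2 : (θ₀ + φ / 2 - (θ₀ + φ / 2 - φ)) / 2 = φ / 2 := by ring
    rw [h1, h2] at this
    linear_combination ρ * this
  unfold f
  rw [show 2 * ρ * cos (θ₀ + φ / 2) = 2 * (ρ * cos (θ₀ + φ / 2)) from by ring,
    show 2 * ρ * cos (θ₀ + φ / 2 - φ) = 2 * (ρ * cos (θ₀ + φ / 2 - φ)) from by ring]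
  rw [key (ρ * cos (θ₀ + φ / 2)) (ρ * cos (θ₀ + φ / 2 - φ))]
  rw [show (ρ * cos (θ₀ + φ / 2) - ρ * cos (θ₀ + φ / 2 - φ)) / 2
      = -(ρ * Real.sin θ₀ * Real.sin (φ / 2)) by rw [hdiff]; ring]
  rw [Real.cosh_neg]

theorem f_monotone_along_line (ρ θ₀ : ℝ) (hρ : 0 ≤ ρ) :
    MonotoneOn (fun φ => f ρ (θ₀ + φ / 2) φ) (Set.Icc 0 π) ∧
      ∀ φ₁ φ₂ : ℝ, 0 ≤ φ₁ → φ₁ ≤ φ₂ → φ₂ ≤ π →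
        f ρ (θ₀ + φ₁ / 2) φ₁ ≤ f ρ (θ₀ + φ₂ / 2) φ₂ := by
  have main : ∀ φ₁ φ₂ : ℝ, 0 ≤ φ₁ → φ₁ ≤ φ₂ → φ₂ ≤ π →
      f ρ (θ₀ + φ₁ / 2) φ₁ ≤ f ρ (θ₀ + φ₂ / 2) φ₂ := by
    intro φ₁ φ₂ h1 h12 h2
    rw [f_eq, f_eq]
    have hsin1 : 0 ≤ Real.sin (φ₁ / 2) := by
      apply Real.sin_nonneg_of_nonneg_of_le_pi
      · linarith
      · linarith [Real.pi_pos]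
    have hmono : Real.sin (φ₁ / 2) ≤ Real.sin (φ₂ / 2) := by
      apply Real.strictMonoOn_sin.monotoneOn
      · constructor <;> [linarith [Real.pi_pos]; linarith]
      · constructor <;> [linarith [Real.pi_pos]; linarith]
      · linarith
    have habs : |ρ * Real.sin θ₀ * Real.sin (φ₁ / 2)|
        ≤ |ρ * Real.sin θ₀ * Real.sin (φ₂ / 2)| := by
      have h1' : |Real.sin (φ₁ / 2)| = Real.sin (φ₁ / 2) := abs_of_nonneg hsin1
      have h2' : |Real.sin (φ₂ / 2)| = Real.sin (φ₂ / 2) :=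
        abs_of_nonneg (le_trans hsin1 hmono)
      have e1 : |ρ * Real.sin θ₀ * Real.sin (φ₁ / 2)|
          = |ρ * Real.sin θ₀| * Real.sin (φ₁ / 2) := by rw [abs_mul, h1']
      have e2 : |ρ * Real.sin θ₀ * Real.sin (φ₂ / 2)|
          = |ρ * Real.sin θ₀| * Real.sin (φ₂ / 2) := by rw [abs_mul, h2']
      rw [e1, e2]
      exact mul_le_mul_of_nonneg_left hmono (abs_nonneg _)
    have hcosh : Real.cosh (ρ * Real.sin θ₀ * Real.sin (φ₁ / 2))
        ≤ Real.cosh (ρ * Real.sin θ₀ * Real.sin (φ₂ / 2)) :=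
      Real.cosh_le_cosh.mpr habs
    have hc1 : 1 ≤ Real.cosh (ρ * Real.sin θ₀ * Real.sin (φ₁ / 2)) :=
      Real.one_le_cosh _
    have hc2 : 1 ≤ Real.cosh (ρ * Real.sin θ₀ * Real.sin (φ₂ / 2)) :=
      Real.one_le_cosh _
    have hsq : 2 * Real.cosh (ρ * Real.sin θ₀ * Real.sin (φ₁ / 2)) ^ 2
        ≤ 2 * Real.cosh (ρ * Real.sin θ₀ * Real.sin (φ₂ / 2)) ^ 2 := by
      nlinarith
    have hpos1 : 0 < 2 * Real.cosh (ρ * Real.sin θ₀ * Real.sin (φ₁ / 2)) ^ 2 := by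
      nlinarith
    have := one_div_le_one_div_of_le hpos1 hsq
    linarith
  refine ⟨?_, main⟩
  intro φ₁ hφ₁ φ₂ hφ₂ h12
  exact main φ₁ φ₂ hφ₁.1 h12 hφ₂.2
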